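/- Let (L, μ, R, d) be a Reynolds LieDer pair over a field k (μ(x,y) = [x,y]). Suppose μ₁ : Λ²L → L is alternating bilinear and R₁, d₁ : L → L are linear maps satisfying, for all a, b, c ∈ L: (i) μ₁(μ(a,b),c) + μ(μ₁(a,b),c) + μ₁(μ(b,c),a) + μ(μ₁(b,c),a) + μ₁(μ(c,a),b) + μ(μ₁(c,a),b) = 0; (ii) μ₁(Ra,Rb) + μ(R₁a,Rb) + μ(Ra,R₁b) − R₁(μ(Ra,b)) − R(μ(R₁a,b)) − R(μ₁(Ra,b)) − R₁(μ(a,Rb)) − R(μ₁(a,Rb)) − R(μ(a,R₁b)) + R₁(μ(Ra,Rb)) + R(μ₁(Ra,Rb)) + R(μ(R₁a,Rb)) + R(μ(Ra,R₁b)) = 0; (iii) d₁(μ(a,b)) + d(μ₁(a,b)) − μ₁(da,b) − μ(d₁a,b) − μ₁(a,db) − μ(a,d₁b) = 0; (iv) R₁∘d + R∘d₁ − d₁∘R − d∘R₁ = 0. Then, with respect to the adjoint representation (V = L, ρ = ad, R_V = R, d_V = d), the triple (μ₁, R₁, d₁) satisfies the 2-cocycle conditions δ_CE μ₁ = 0,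 δ_R R₁ + φ μ₁ = 0, δ_CE d₁ + Δ μ₁ = 0, and Δ R₁ − φ d₁ = 0. -/
import Mathlib


namespace ReynoldsDeformation

variable {k L V : Type*} [Field k] [LieRing L] [LieAlgebra k L]
  [AddCommGroup V] [Module k V]

/-- Chevalley–Eilenberg-type coboundary operator determined by an action-like map `rh`
and a bracket-like map `br`, acting on plain `m`-cochains `(Fin m → L) → V`:
`(δ f)(x₁,…,x_{m+1}) = Σᵢ (-1)^{i+m} rh(xᵢ) f(x₁,…,x̂ᵢ,…,x_{m+1})
  + Σ_{i<j} (-1)^{i+j+m+1} f(br(xᵢ,xⱼ), x₁,…,x̂ᵢ,…,x̂ⱼ,…,x_{m+1})`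
(1-indexed, as in the paper; here the indices are 0-based). -/
def cobound (rh : L → V → V) (br : L → L → L) :
    (m : ℕ) → ((Fin m → L) → V) → (Fin (m + 1) → L) → V
  | 0, f, x => - rh (x 0) (f fun j => j.elim0)
  | n + 1, f, x =>
      (∑ i : Fin (n + 2), ((-1 : ℤ) ^ ((i : ℕ) + n)) • rh (x i) (f fun l => x (i.succAbove l)))
        + ∑ i : Fin (n + 2), ∑ j : Fin (n + 1),
            if (i : ℕ) ≤ (j : ℕ) then
              ((-1 : ℤ) ^ ((i : ℕ) + (j : ℕ) + n + 1)) •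
                f (Fin.cons (br (x i) (x (i.succAbove j)))
                    fun l : Fin n => x (i.succAbove (j.succAbove l)))
            else 0

/-- The map `φ` from Chevalley–Eilenberg cochains to cochains of the Reynolds operator:
`(φ f)(x₁,…,x_m) = f(R x₁,…,R x_m) - R_V (Σᵢ f(R x₁,…,xᵢ,…,R x_m))
  + (m-1) R_V f(R x₁,…,R x_m)` for `m ≥ 1`, and `φ = id` for `m = 0`. -/
def phimap (Rm : L → L) (RV : V → V) :
    (m : ℕ) → ((Fin m → L) → V) → (Fin m → L) → V
  | 0, f => f
  | n + 1, f => fun x =>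
      f (fun i => Rm (x i))
        - RV (∑ i : Fin (n + 1), f fun j => if j = i then x j else Rm (x j))
        + n • RV (f fun i => Rm (x i))

/-- The operator `Δ` induced by a pair of derivations:
`(Δ f)(x₁,…,x_m) = Σᵢ f(x₁,…,d xᵢ,…,x_m) - d_V (f(x₁,…,x_m))`. -/
def deltamap (dm : L → L) (dV : V → V) {m : ℕ} (f : (Fin m → L) → V) :
    (Fin m → L) → V :=
  fun x => (∑ i : Fin m, f (Function.update x i (dm (x i)))) - dV (f x)

/-- The bracket `[x, y]_R := [x, R y] + [R x, y] - [R x, R y]` induced by a Reynolds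
operator. -/
def brR (R : L →ₗ[k] L) (x y : L) : L := ⁅x, R y⁆ + ⁅R x, y⁆ - ⁅R x, R y⁆

/-- The induced action `ρ_R(x)u := ρ(R x)u + R_V(ρ(R x)u - ρ(x)u)`. -/
def rhoR (R : L →ₗ[k] L) (ρ : L →ₗ[k] Module.End k V) (RV : V →ₗ[k] V)
    (x : L) (v : V) : V :=
  ρ (R x) v + RV (ρ (R x) v - ρ x v)

/-- The infinitesimal `(μ₁, R₁, d₁)` of a formal deformation of a Reynolds LieDer pair
`(L, μ, R, d)` is a 2-cocycle of the Reynolds LieDer pair with coefficients in the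
adjoint representation: conditions (i)–(iv) obtained from the coefficient of `t` imply
`δ_CE μ₁ = 0`, `δ_R R₁ + φ μ₁ = 0`, `δ_CE d₁ + Δ μ₁ = 0` and `Δ R₁ - φ d₁ = 0`. -/
theorem infinitesimal_is_two_cocycle
    (R : L →ₗ[k] L)
    (hR : ∀ x y : L, ⁅R x, R y⁆ = R (⁅R x, y⁆ + ⁅x, R y⁆ - ⁅R x, R y⁆))
    (d : L →ₗ[k] L)
    (hd : ∀ x y : L, d ⁅x, y⁆ = ⁅d x, y⁆ + ⁅x, d y⁆)
    (hRd : ∀ x : L, R (d x) = d (R x))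
    (μ₁ : L →ₗ[k] L →ₗ[k] L) (hμ₁ : ∀ x : L, μ₁ x x = 0)
    (R₁ : L →ₗ[k] L) (d₁ : L →ₗ[k] L)
    (h1 : ∀ a b c : L,
      μ₁ ⁅a, b⁆ c + ⁅μ₁ a b, c⁆ + μ₁ ⁅b, c⁆ a + ⁅μ₁ b c, a⁆ + μ₁ ⁅c, a⁆ b + ⁅μ₁ c a, b⁆ = 0)
    (h2 : ∀ a b : L,
      μ₁ (R a) (R b) + ⁅R₁ a, R b⁆ + ⁅R a, R₁ b⁆ - R₁ ⁅R a, b⁆ - R ⁅R₁ a, b⁆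
        - R (μ₁ (R a) b) - R₁ ⁅a, R b⁆ - R (μ₁ a (R b)) - R ⁅a, R₁ b⁆
        + R₁ ⁅R a, R b⁆ + R (μ₁ (R a) (R b)) + R ⁅R₁ a, R b⁆ + R ⁅R a, R₁ b⁆ = 0)
    (h3 : ∀ a b : L,
      d₁ ⁅a, b⁆ + d (μ₁ a b) - μ₁ (d a) b - ⁅d₁ a, b⁆ - μ₁ a (d b) - ⁅a, d₁ b⁆ = 0)
    (h4 : ∀ a : L, R₁ (d a) + R (d₁ a) - d₁ (R a) - d (R₁ a) = 0) :
    (cobound (fun x v => ⁅x, v⁆) (fun x y => ⁅x, y⁆) 2 (fun x => μ₁ (x 0) (x 1)) = 0) ∧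
    (cobound (fun x v => ⁅R x, v⁆ + R (⁅R x, v⁆ - ⁅x, v⁆)) (brR R) 1 (fun x => R₁ (x 0))
        + phimap (fun x => R x) (fun v => R v) 2 (fun x => μ₁ (x 0) (x 1)) = 0) ∧
    (cobound (fun x v => ⁅x, v⁆) (fun x y => ⁅x, y⁆) 1 (fun x => d₁ (x 0))
        + deltamap (fun x => d x) (fun v => d v) (fun x => μ₁ (x 0) (x 1)) = 0) ∧
    (deltamap (fun x => d x) (fun v => d v) (fun x => R₁ (x 0))
        - phimap (fun x => R x) (fun v => R v) 1 (fun x => d₁ (x 0)) = 0) := by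
  have hskew : ∀ a b : L, μ₁ a b = - μ₁ b a := by
    intro a b
    have h := hμ₁ (a + b)
    simp [map_add, hμ₁] at h
    exact eq_neg_of_add_eq_zero_right h
  refine ⟨?_, ?_, ?_, ?_⟩
  · funext x
    simp only [cobound, Fin.sum_univ_succ, Fin.sum_univ_zero, Fin.isValue, Fin.succAbove,
      Fin.cons_zero, Fin.cons_one, Pi.zero_apply]
    norm_num [Fin.lt_def]
    have h := h1 (x 0) (x 1) (x 2)
    have e1 : ⁅x 2, x 0⁆ = -⁅x 0, x 2⁆ := by rw [← lie_skew]
    have e2 : ⁅x 1, μ₁ (x 0) (x 2)⁆ = -⁅μ₁ (x 0) (x 2), x 1⁆ := by rw [← lie_skew]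
    rw [e1, map_neg, hskew (x 2) (x 0), neg_lie] at h
    simp only [LinearMap.neg_apply] at h
    rw [e2, ← h]
    abel
  · funext x
    simp only [cobound, phimap, brR, Fin.sum_univ_succ, Fin.sum_univ_zero, Fin.isValue,
      Fin.succAbove, Fin.cons_zero, Pi.add_apply, Pi.zero_apply, map_add, map_sub, smul_sub,
      smul_add]
    norm_num [Fin.lt_def]
    have h := h2 (x 0) (x 1)
    have e1 : ⁅R (x 1), R₁ (x 0)⁆ = -⁅R₁ (x 0), R (x 1)⁆ := by rw [← lie_skew]
    have e2 : ⁅x 1, R₁ (x 0)⁆ = -⁅R₁ (x 0), x 1⁆ := by rw [← lie_skew]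
    rw [e1, e2, map_neg, map_neg, ← h]
    abel
  · funext x
    simp only [cobound, deltamap, Fin.sum_univ_succ, Fin.sum_univ_zero, Fin.isValue,
      Fin.succAbove, Fin.cons_zero, Function.update, Pi.add_apply, Pi.zero_apply]
    norm_num [Fin.lt_def]
    have h := h3 (x 0) (x 1)
    rw [← neg_eq_zero, ← h]
    abel
  · funext x
    simp only [deltamap, phimap, Fin.sum_univ_succ, Fin.sum_univ_zero, Fin.isValue,
      Function.update, Pi.sub_apply, Pi.zero_apply]
    norm_num
    have h := h4 (x 0)
    rw [← h]
    abel


end ReynoldsDeformation
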